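/- Starting from any initial partition of a finite player set, repeated application of switch operations that each strictly increase total utility reaches, after finitely many steps, a partition from which no beneficial switch exists, and this final partition is Nash-stable. -/

import Mathlib

/-- A switch operation from partition `Prt` to `Prt'` that strictly increases the
total utility. -/
def BeneficialSwitch {L : Type*} [DecidableEq L]
    (U : Finset L → ℝ) (Prt Prt' : Finset (Finset L)) : Prop :=
  ∃ (l : L) (Sp Sq : Finset L), Sp ∈ Prt ∧ l ∈ Sp ∧ (Sq ∈ Prt ∨ Sq = ∅) ∧ Sq ≠ Sp ∧
    Prt' = ((Prt \ {Sp, Sq}) ∪ {Sp.erase l} ∪ {insert l Sq}).erase ∅ ∧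
    (∑ S ∈ Prt', U S) > ∑ S ∈ Prt, U S

/-- A partition is Nash-stable: no player strictly prefers deviating to another
coalition of the partition or to the empty coalition. -/
def NashStable {L : Type*} [DecidableEq L]
    (U : Finset L → ℝ) (Prt : Finset (Finset L)) : Prop :=
  ¬ ∃ (l : L) (Sp Sq : Finset L), Sp ∈ Prt ∧ l ∈ Sp ∧
      (Sq ∈ Prt ∨ Sq = ∅) ∧ Sq ≠ Sp ∧
      U (insert l Sq) + U (Sp.erase l) > U Sq + U Sp


lemma sum_switch {L : Type*} [DecidableEq L]
    (U : Finset L → ℝ) (hU0 : U ∅ = 0)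
    (Prt : Finset (Finset L))
    (hdisj : ∀ S ∈ Prt, ∀ T ∈ Prt, S ≠ T → Disjoint S T)
    (hne : ∅ ∉ Prt) {l : L} {Sp Sq : Finset L}
    (hSp : Sp ∈ Prt) (hl : l ∈ Sp) (hSq : Sq ∈ Prt ∨ Sq = ∅) (hSqSp : Sq ≠ Sp) :
    ∑ S ∈ ((Prt \ {Sp, Sq}) ∪ {Sp.erase l} ∪ {insert l Sq}).erase ∅, U S
      = ∑ S ∈ Prt, U S - U Sp - U Sq + U (Sp.erase l) + U (insert l Sq) := by
  set A := Prt \ ({Sp, Sq} : Finset (Finset L)) with hA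
  have hxA : Sp.erase l ∉ A := by
    intro hx
    have hxP : Sp.erase l ∈ Prt := (Finset.mem_sdiff.mp hx).1
    have hxne : Sp.erase l ≠ Sp := by
      intro h
      apply Finset.notMem_erase l Sp
      rw [h]; exact hl
    have d : Disjoint (Sp.erase l) Sp := hdisj _ hxP _ hSp hxne
    have : Sp.erase l = ∅ := by
      have := disjoint_self.mp (d.mono_right (Finset.erase_subset l Sp))
      simpa using this
    exact hne (this ▸ hxP)
  have hlSq : l ∉ Sq := by
    rcases hSq with h | h
    · exact fun hm => (Finset.disjoint_left.mp (hdisj _ h _ hSp hSqSp)) hm hl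
    · simp [h]
  have hyx : insert l Sq ≠ Sp.erase l := by
    intro h
    have : l ∈ Sp.erase l := h ▸ Finset.mem_insert_self l Sq
    exact Finset.notMem_erase l Sp this
  have hyA : insert l Sq ∉ A := by
    intro hy
    have hyP : insert l Sq ∈ Prt := (Finset.mem_sdiff.mp hy).1
    have hyne : insert l Sq ≠ Sp := by
      have := Finset.mem_sdiff.mp hy
      simp only [Finset.mem_insert, Finset.mem_singleton] at this
      tauto
    exact (Finset.disjoint_left.mp (hdisj _ hyP _ hSp hyne))
      (Finset.mem_insert_self l Sq) hl
  have hre : A ∪ {Sp.erase l} ∪ {insert l Sq}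
      = insert (insert l Sq) (insert (Sp.erase l) A) := by
    ext T
    simp only [Finset.mem_union, Finset.mem_singleton, Finset.mem_insert]
    tauto
  rw [hre, Finset.sum_erase _ hU0, Finset.sum_insert (by
      simp only [Finset.mem_insert]
      push_neg
      exact ⟨hyx, hyA⟩), Finset.sum_insert hxA]
  have hAsum : ∑ S ∈ A, U S = ∑ S ∈ Prt, U S - U Sp - U Sq := by
    rcases hSq with h | h
    · have hsub : ({Sp, Sq} : Finset (Finset L)) ⊆ Prt := by
        intro T hT
        simp only [Finset.mem_insert, Finset.mem_singleton] at hT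
        rcases hT with rfl | rfl <;> assumption
      rw [hA, Finset.sum_sdiff_eq_sub hsub, Finset.sum_pair (Ne.symm hSqSp)]
      ring
    · subst h
      have : A = Prt.erase Sp := by
        ext T
        simp only [hA, Finset.mem_sdiff, Finset.mem_insert, Finset.mem_singleton,
          Finset.mem_erase]
        constructor
        · rintro ⟨hT, h2⟩; push_neg at h2; exact ⟨h2.1, hT⟩
        · rintro ⟨h1, hT⟩
          refine ⟨hT, ?_⟩
          push_neg
          exact ⟨h1, Finset.nonempty_iff_ne_empty.mpr fun (h : T = ∅) => hne (h ▸ hT)⟩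
      rw [this, Finset.sum_erase_eq_sub hSp, hU0]
      ring
  rw [hAsum]; ring

lemma good_switch {L : Type*} [DecidableEq L]
    (U : Finset L → ℝ) {Prt Prt' : Finset (Finset L)}
    (hdisj : ∀ S ∈ Prt, ∀ T ∈ Prt, S ≠ T → Disjoint S T)
    (hne : ∅ ∉ Prt) (h : BeneficialSwitch U Prt Prt') :
    (∀ S ∈ Prt', ∀ T ∈ Prt', S ≠ T → Disjoint S T) ∧ ∅ ∉ Prt' := by
  obtain ⟨l, Sp, Sq, hSp, hl, hSq, hSqSp, hPrt', -⟩ := h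
  have hlSq : l ∉ Sq := by
    rcases hSq with h | h
    · exact fun hm => (Finset.disjoint_left.mp (hdisj _ h _ hSp hSqSp)) hm hl
    · simp [h]
  have key1 : ∀ T ∈ Prt, T ≠ Sp → Disjoint (Sp.erase l) T :=
    fun T hT hTS => (hdisj _ hSp _ hT (Ne.symm hTS)).mono_left (Finset.erase_subset l Sp)
  have key2 : ∀ T ∈ Prt, T ≠ Sp → T ≠ Sq → Disjoint (insert l Sq) T := by
    intro T hT h1 h2
    rw [Finset.disjoint_insert_left]
    refine ⟨fun hm => (Finset.disjoint_left.mp (hdisj _ hSp _ hT (Ne.symm h1))) hl hm, ?_⟩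
    rcases hSq with h | h
    · exact hdisj _ h _ hT (Ne.symm h2)
    · simp [h]
  have key3 : Disjoint (Sp.erase l) (insert l Sq) := by
    rw [Finset.disjoint_insert_right]
    refine ⟨Finset.notMem_erase l Sp, ?_⟩
    rcases hSq with h | h
    · exact (hdisj _ hSp _ h (Ne.symm hSqSp)).mono_left (Finset.erase_subset l Sp)
    · simp [h]
  constructor
  · intro S hS T hT hST
    subst hPrt'
    simp only [Finset.mem_erase, Finset.mem_union, Finset.mem_sdiff,
      Finset.mem_insert, Finset.mem_singleton] at hS hT
    obtain ⟨-, hS⟩ := hS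
    obtain ⟨-, hT⟩ := hT
    rcases hS with (⟨hS1, hS2⟩ | rfl) | rfl <;>
      rcases hT with (⟨hT1, hT2⟩ | rfl) | rfl
    · push_neg at hS2 hT2
      exact hdisj _ hS1 _ hT1 hST
    · push_neg at hS2
      exact (key1 _ hS1 hS2.1).symm
    · push_neg at hS2
      exact (key2 _ hS1 hS2.1 hS2.2).symm
    · push_neg at hT2
      exact key1 _ hT1 hT2.1
    · exact absurd rfl hST
    · exact key3
    · push_neg at hT2
      exact key2 _ hT1 hT2.1 hT2.2
    · exact key3.symm
    · exact absurd rfl hST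
  · rw [hPrt']
    exact Finset.notMem_erase _ _

/-- Starting from any initial partition, a dynamics of beneficial switch
operations reaches after finitely many steps a partition from which no
beneficial switch exists, and this final partition is Nash-stable. -/
theorem switch_dynamics_converges_to_nash_stable
    {L : Type*} [Fintype L] [DecidableEq L]
    (U : Finset L → ℝ) (hU0 : U ∅ = 0)
    (P : ℕ → Finset (Finset L))
    (hdisj : ∀ S ∈ P 0, ∀ T ∈ P 0, S ≠ T → Disjoint S T)
    (hne : ∀ S ∈ P 0, S ≠ ∅)
    (hcover : ∀ x : L, ∃ S ∈ P 0, x ∈ S)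
    (hstep : ∀ k, BeneficialSwitch U (P k) (P (k + 1)) ∨
      (P (k + 1) = P k ∧ ∀ Prt', ¬ BeneficialSwitch U (P k) Prt')) :
    ∃ N, (∀ Prt', ¬ BeneficialSwitch U (P N) Prt') ∧ NashStable U (P N) := by
  have good : ∀ k, (∀ S ∈ P k, ∀ T ∈ P k, S ≠ T → Disjoint S T) ∧ ∅ ∉ P k := by
    intro k
    induction k with
    | zero => exact ⟨hdisj, fun h => hne ∅ h rfl⟩
    | succ k ih =>
      rcases hstep k with h | ⟨heq, -⟩
      · exact good_switch U ih.1 ih.2 h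
      · rw [heq]; exact ih
  have hex : ∃ N, ∀ Prt', ¬ BeneficialSwitch U (P N) Prt' := by
    by_contra hcon
    push_neg at hcon
    have hall : ∀ k, BeneficialSwitch U (P k) (P (k + 1)) := by
      intro k
      rcases hstep k with h | ⟨-, h2⟩
      · exact h
      · obtain ⟨Q, hQ⟩ := hcon k
        exact absurd hQ (h2 Q)
    have hmono : StrictMono (fun k => ∑ S ∈ P k, U S) := by
      apply strictMono_nat_of_lt_succ
      intro k
      obtain ⟨_, _, _, _, _, _, _, _, hgt⟩ := hall k
      exact hgt
    have hinj : Function.Injective P := fun a b hab =>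
      hmono.injective (by simp only [hab])
    obtain ⟨a, b, hab, heq⟩ := Finite.exists_ne_map_eq_of_infinite P
    exact hab (hinj heq)
  obtain ⟨N, hN⟩ := hex
  refine ⟨N, hN, ?_⟩
  rintro ⟨l, Sp, Sq, hSp, hl, hSq, hSqSp, hgt⟩
  apply hN (((P N \ {Sp, Sq}) ∪ {Sp.erase l} ∪ {insert l Sq}).erase ∅)
  refine ⟨l, Sp, Sq, hSp, hl, hSq, hSqSp, rfl, ?_⟩
  rw [sum_switch U hU0 _ (good N).1 (good N).2 hSp hl hSq hSqSp]
  linarith
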